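/- arXiv:1507.01424 — 2 statements merged into one kernel-verified Lean document; each statement's English description precedes it below -/
import Mathlib

section
/- Suppose that p ↦ H(t,x,p) is finite and convex for every (t,x) ∈ [0,T]×ℝⁿ, and let L(t,x,·) = H*(t,x,·) and H(t,x,·) = L*(t,x,·) (Legendre–Fenchel conjugates). Then the following three conditions are equivalent, with the same functions k_R(·), w_R(·,·) and null set N_R: (HLC) for every R > 0 there exist a measurable k_R : [0,T] → [0,∞), a modulus w_R, and a null set N_R such that |H(t,x,p) − H(t,y,p)| ≤ k_R(t)|p||x−y| + w_R(t,|x−y|) for all t ∈ [0,T]\N_R, x,y ∈ B_R, p ∈ ℝⁿ; (LLC) for every R > 0 there exist such k_R, w_R, N_R with: for all t ∈ [0,T]\N_R, x,y ∈ B_R, and every v ∈ dom L(t,x,·) there exists u ∈ dom L(t,y,·) with |u−v| ≤ k_R(t)|y−x| and L(t,y,u) ≤ L(t,x,v) + w_R(t,|x−y|); (MLC) for every R > 0 there exist such k_R, w_R, N_R with E_L(t,x) ⊂ E_L(t,y) + (k_R(t)|x−y| B)×(w_R(t,|x−y|)[−1,1]) for all t ∈ [0,T]\N_R and x,y ∈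 B_R. -/
open Filter Topology MeasureTheory Set Metric
open scoped RealInnerProductSpace Pointwise

noncomputable section

abbrev Eucl (n : ℕ) := EuclideanSpace ℝ (Fin n)

/-- Legendre–Fenchel transform in the last variable of a real-valued Hamiltonian:
`LFT H t x v = sup_p (⟪v,p⟫ − H t x p)`, with values in `EReal = ℝ ∪ {±∞}`. -/
def LFT {n : ℕ} (H : ℝ → Eucl n → Eucl n → ℝ) (t : ℝ) (x v : Eucl n) : EReal :=
  ⨆ p : Eucl n, ((⟪v, p⟫ - H t x p : ℝ) : EReal)

/-- Epigraph `E_L(t,x) = {(v,η) | L(t,x,v) ≤ η}` of the Lagrangian `L = LFT H`. -/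
def epiL {n : ℕ} (H : ℝ → Eucl n → Eucl n → ℝ) (t : ℝ) (x : Eucl n) : Set (Eucl n × ℝ) :=
  {q | LFT H t x q.1 ≤ (q.2 : EReal)}

/-- Legendre–Fenchel conjugate of an extended-real-valued function. -/
def eConj {n : ℕ} (φ : Eucl n → EReal) (v : Eucl n) : EReal :=
  ⨆ p : Eucl n, (((⟪v, p⟫ : ℝ) : EReal) - φ p)

/-- A modulus: `w(·,r)` measurable, `w(t,·)` nonnegative, nondecreasing, continuous,
subadditive with `w(t,0) = 0`. -/
def IsModulus (w : ℝ → ℝ → ℝ) : Prop :=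
  (∀ r, Measurable fun t => w t r) ∧
  ∀ t, (∀ r, 0 ≤ w t r) ∧ Monotone (w t) ∧ Continuous (w t) ∧
    (∀ a b : ℝ, 0 ≤ a → 0 ≤ b → w t (a + b) ≤ w t a + w t b) ∧ w t 0 = 0

/-- Convexity of an `EReal`-valued function. -/
def EConvex {F : Type*} [AddCommMonoid F] [Module ℝ F] (φ : F → EReal) : Prop :=
  ∀ v u : F, ∀ a b : ℝ, 0 ≤ a → 0 ≤ b → a + b = 1 →
    φ (a • v + b • u) ≤ (a : EReal) * φ v + (b : EReal) * φ u

/-- A proper extended-real-valued function: never `−∞` and not identically `+∞`. -/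
def EProper {F : Type*} (φ : F → EReal) : Prop :=
  (∀ v, φ v ≠ ⊥) ∧ ∃ v, φ v ≠ ⊤

/-!
Fix `t, x, y` and write `f = H(t,x,·)`, `g = H(t,y,·)`. The one-sided bound
`f ≤ g + r‖·‖ + w` gives `⟪v,p⟫ - r‖p‖ - g p ≤ f*(v) + w` for all `p`, and then some
`u ∈ B(v, r)` has `g*(u) ≤ f*(v) + w`: otherwise a hyperplane strictly separates the closed
convex epigraph of `g*` from the compact set `B(v, r) × {f*(v) + w}`, and evaluating it at the
points `(u, g*(u))` with `u` a subgradient of `g` (where Fenchel–Young is an equality)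
contradicts the bound. Conversely, if `v` is a subgradient of `f` at `p` and `u` is the point
given by (LLC), then `f p - g p ≤ ⟪v - u, p⟫ + w ≤ r‖p‖ + w`. Applying this to `(x, y)` and
`(y, x)` gives (HLC) ⇔ (LLC), while (LLC) ⇔ (MLC) is a reformulation: `(v, η) ∈ E_L(t,x)` is
the sum of `(u, η + w) ∈ E_L(t,y)` and `(v - u, -w)`.
-/

section FenchelConjugate

variable {E : Type*} [NormedAddCommGroup E] [InnerProductSpace ℝ E]

-- `LFT H t x` is definitionally `fenchelConj (H t x)`, and `epiL H t x` its epigraph.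
def fenchelConj (f : E → ℝ) (v : E) : EReal :=
  ⨆ p : E, ((⟪v, p⟫ - f p : ℝ) : EReal)

theorem inner_sub_le_fenchelConj (f : E → ℝ) (v p : E) :
    ((⟪v, p⟫ - f p : ℝ) : EReal) ≤ fenchelConj f v :=
  le_iSup (fun p => ((⟪v, p⟫ - f p : ℝ) : EReal)) p

theorem fenchelConj_ne_bot (f : E → ℝ) (v : E) : fenchelConj f v ≠ ⊥ :=
  ne_bot_of_le_ne_bot (EReal.coe_ne_bot _) (inner_sub_le_fenchelConj f v 0)

theorem fenchelConj_le_coe_iff {f : E → ℝ} {v : E} {c : ℝ} :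
    fenchelConj f v ≤ c ↔ ∀ p, ⟪v, p⟫ - f p ≤ c := by
  simp only [fenchelConj, iSup_le_iff, EReal.coe_le_coe_iff]

theorem fenchelConj_epigraph_eq_iInter (f : E → ℝ) :
    {q : E × ℝ | fenchelConj f q.1 ≤ q.2} = ⋂ p, {q : E × ℝ | ⟪q.1, p⟫ - q.2 ≤ f p} := by
  ext q
  simp only [mem_ofPred_eq, mem_iInter, fenchelConj_le_coe_iff, sub_le_comm]

theorem isClosed_fenchelConj_epigraph (f : E → ℝ) :
    IsClosed {q : E × ℝ | fenchelConj f q.1 ≤ q.2} := by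
  rw [fenchelConj_epigraph_eq_iInter]
  exact isClosed_iInter fun p =>
    isClosed_le ((continuous_fst.inner continuous_const).sub continuous_snd) continuous_const

theorem convex_fenchelConj_epigraph (f : E → ℝ) :
    Convex ℝ {q : E × ℝ | fenchelConj f q.1 ≤ q.2} := by
  rw [fenchelConj_epigraph_eq_iInter]
  exact convex_iInter fun p => convex_halfSpace_le
    (((innerₛₗ ℝ).flip p ∘ₗ LinearMap.fst ℝ E ℝ - LinearMap.snd ℝ E ℝ).isLinear) (f p)

theorem StrongDual.exists_inner_add_mul_eq [CompleteSpace E] (φ : StrongDual ℝ (E × ℝ)) :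
    ∃ (q : E) (s : ℝ), ∀ u μ, φ (u, μ) = ⟪q, u⟫ + μ * s := by
  refine ⟨(InnerProductSpace.toDual ℝ E).symm (φ.comp (.inl ℝ E ℝ)), φ (0, 1), fun u μ => ?_⟩
  have hμ : ((0 : E), μ) = μ • ((0 : E), (1 : ℝ)) := by simp
  rw [InnerProductSpace.toDual_symm_apply, ← φ.comp_inl_add_comp_inr (u, μ)]
  simp only [ContinuousLinearMap.comp_apply, ContinuousLinearMap.inl_apply,
    ContinuousLinearMap.inr_apply, hμ, map_smul, smul_eq_mul]

theorem exists_mem_closedBall_inner_eq (q v : E) {r : ℝ} (hr : 0 ≤ r) :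
    ∃ u ∈ closedBall v r, ⟪q, u⟫ = ⟪q, v⟫ - r * ‖q‖ := by
  rcases eq_or_ne q 0 with rfl | hq
  · exact ⟨v, mem_closedBall_self hr, by simp⟩
  have hq' : 0 < ‖q‖ := norm_pos_iff.2 hq
  refine ⟨v - (r / ‖q‖) • q, ?_, ?_⟩
  · rw [mem_closedBall, dist_eq_norm, sub_sub_cancel_left, norm_neg, norm_smul,
      Real.norm_of_nonneg (div_nonneg hr hq'.le), div_mul_cancel₀ _ hq'.ne']
  · rw [inner_sub_right, real_inner_smul_right, real_inner_self_eq_norm_sq]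
    field_simp

variable [FiniteDimensional ℝ E]

theorem ConvexOn.exists_subgradient {f : E → ℝ} (hf : ConvexOn ℝ univ f) (p : E) :
    ∃ v : E, ∀ q, f p + ⟪v, q - p⟫ ≤ f q := by
  have hopen : IsOpen {q : E × ℝ | q.1 ∈ univ ∧ f q.1 < q.2} := by
    simpa using isOpen_lt (hf.locallyLipschitz.continuous.comp continuous_fst) continuous_snd
  obtain ⟨φ, hφ⟩ := geometric_hahn_banach_open_point hf.convex_strict_epigraph hopen
    (x := (p, f p)) (by simp)
  obtain ⟨q₀, s, hqs⟩ := φ.exists_inner_add_mul_eq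
  have hlt : ∀ q (μ : ℝ), f q < μ → ⟪q₀, q⟫ + μ * s < ⟪q₀, p⟫ + f p * s := fun q μ h => by
    simpa only [hqs] using hφ (q, μ) ⟨mem_univ q, h⟩
  have hs : s < 0 := by nlinarith [hlt p (f p + 1) (by linarith)]
  refine ⟨(-s)⁻¹ • q₀, fun q => ?_⟩
  have hle : ⟪q₀, q⟫ + f q * s ≤ ⟪q₀, p⟫ + f p * s := by
    refine le_of_forall_pos_lt_add fun ε hε => ?_
    have hμ : f q < f q - ε / s := by have := div_neg_of_pos_of_neg hε hs; linarith
    have hμs : (f q - ε / s) * s = f q * s - ε := by rw [sub_mul, div_mul_cancel₀ _ hs.ne]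
    have := hlt q _ hμ
    linarith
  have : (-s)⁻¹ * (⟪q₀, q⟫ - ⟪q₀, p⟫) ≤ f q - f p := by
    rw [inv_mul_le_iff₀ (neg_pos.2 hs)]
    linarith
  rw [real_inner_smul_left, inner_sub_right]
  linarith

theorem ConvexOn.exists_fenchelConj_eq {f : E → ℝ} (hf : ConvexOn ℝ univ f) (p : E) :
    ∃ v : E, fenchelConj f v = ((⟪v, p⟫ - f p : ℝ) : EReal) := by
  obtain ⟨v, hv⟩ := hf.exists_subgradient p
  refine ⟨v, le_antisymm (fenchelConj_le_coe_iff.2 fun q => ?_) (inner_sub_le_fenchelConj f v p)⟩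
  have := hv q
  rw [inner_sub_right] at this
  linarith

theorem ConvexOn.inner_sub_mul_norm_add_mul_le {g : E → ℝ} (hg : ConvexOn ℝ univ g)
    {v q : E} {r c s a : ℝ} (hc : ∀ p, ⟪v, p⟫ - r * ‖p‖ - g p ≤ c)
    (ha : ∀ u (μ : ℝ), fenchelConj g u ≤ μ → ⟪q, u⟫ + μ * s < a) :
    ⟪q, v⟫ - r * ‖q‖ + c * s ≤ a := by
  have hs : s ≤ 0 := by
    by_contra! hs
    obtain ⟨u, hu⟩ := hg.exists_fenchelConj_eq 0
    have h := ha u _ (hu.le.trans (EReal.coe_le_coe_iff.2 (le_max_left _ ((a - ⟪q, u⟫) / s))))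
    have := (div_le_iff₀ hs).1 (le_max_right (⟪u, 0⟫ - g 0) ((a - ⟪q, u⟫) / s))
    linarith
  -- A non-vertical separating hyperplane (`s < 0`) bounds `g` at its slope; a vertical one
  -- (`s = 0`) makes `g` grow at most linearly along `q`. Both contradict `hc`.
  rcases hs.lt_or_eq with hs | rfl
  · have hs' : 0 < -s := neg_pos.2 hs
    obtain ⟨p, rfl⟩ : ∃ p, q = (-s) • p := ⟨(-s)⁻¹ • q, (smul_inv_smul₀ hs'.ne' q).symm⟩
    obtain ⟨u, hu⟩ := hg.exists_fenchelConj_eq p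
    have h₁ := ha u _ hu.le
    have h₂ := mul_le_mul_of_nonneg_left (hc p) hs'.le
    rw [real_inner_smul_left, real_inner_comm u] at h₁
    rw [real_inner_smul_left, norm_smul, Real.norm_of_nonneg hs'.le, real_inner_comm v]
    nlinarith
  · have hgrowth : ∀ μ : ℝ, 0 ≤ μ → g (μ • q) ≤ μ * a + g 0 := fun μ hμ => by
      obtain ⟨u, hu⟩ := hg.exists_fenchelConj_eq (μ • q)
      have h₁ := ha u _ hu.le
      have h₂ := EReal.coe_le_coe_iff.1 (hu ▸ inner_sub_le_fenchelConj g u 0)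
      rw [inner_zero_right, real_inner_smul_right, real_inner_comm] at h₂
      nlinarith [mul_le_mul_of_nonneg_left h₁.le hμ]
    by_contra! h
    obtain ⟨n, hn⟩ := exists_nat_gt ((c + g 0) / (⟪q, v⟫ - r * ‖q‖ - a))
    rw [div_lt_iff₀ (by linarith)] at hn
    have h₁ := hc ((n : ℝ) • q)
    have h₂ := hgrowth n n.cast_nonneg
    rw [real_inner_smul_right, norm_smul, Real.norm_natCast, real_inner_comm] at h₁
    linarith

theorem ConvexOn.exists_fenchelConj_le {g : E → ℝ} (hg : ConvexOn ℝ univ g) {v : E} {r c : ℝ}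
    (hr : 0 ≤ r) (hc : ∀ p, ⟪v, p⟫ - r * ‖p‖ - g p ≤ c) :
    ∃ u, ‖u - v‖ ≤ r ∧ fenchelConj g u ≤ c := by
  by_contra! hcon
  have hdisj : Disjoint {q : E × ℝ | fenchelConj g q.1 ≤ q.2} (closedBall v r ×ˢ {c}) := by
    rw [Set.disjoint_left]
    rintro ⟨u, μ⟩ hu ⟨hu', rfl : μ = c⟩
    exact (hcon u (by rwa [mem_closedBall, dist_eq_norm] at hu')).not_ge hu
  obtain ⟨φ, a, b, hS, hab, hK⟩ := geometric_hahn_banach_closed_compact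
    (convex_fenchelConj_epigraph g) (isClosed_fenchelConj_epigraph g)
    ((convex_closedBall v r).prod (convex_singleton c))
    ((isCompact_closedBall v r).prod isCompact_singleton) hdisj
  obtain ⟨q, s, hφ⟩ := φ.exists_inner_add_mul_eq
  obtain ⟨u, hu, hqu⟩ := exists_mem_closedBall_inner_eq q v hr
  have hb := hK (u, c) ⟨hu, rfl⟩
  have ha := hg.inner_sub_mul_norm_add_mul_le hc fun u μ h => by
    simpa only [hφ] using hS (u, μ) h
  rw [hφ, hqu] at hb
  linarith

theorem ConvexOn.forall_sub_le_iff_forall_exists_fenchelConj_le {f g : E → ℝ}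
    (hf : ConvexOn ℝ univ f) (hg : ConvexOn ℝ univ g) {r w : ℝ} (hr : 0 ≤ r) :
    (∀ p, f p - g p ≤ r * ‖p‖ + w) ↔
      ∀ v, fenchelConj f v ≠ ⊤ → ∃ u, fenchelConj g u ≠ ⊤ ∧ ‖u - v‖ ≤ r ∧
        fenchelConj g u ≤ fenchelConj f v + (w : EReal) := by
  constructor
  · intro hfg v hv
    obtain ⟨ρ, hρ⟩ : ∃ ρ : ℝ, fenchelConj f v = ρ :=
      ⟨_, (EReal.coe_toReal hv (fenchelConj_ne_bot f v)).symm⟩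
    obtain ⟨u, hu, hgu⟩ := hg.exists_fenchelConj_le (c := ρ + w) hr fun p => by
      linarith [fenchelConj_le_coe_iff.1 hρ.le p, hfg p]
    rw [hρ, ← EReal.coe_add]
    exact ⟨u, ne_top_of_le_ne_top (EReal.coe_ne_top _) hgu, hu, hgu⟩
  · intro h p
    obtain ⟨v, hv⟩ := hf.exists_fenchelConj_eq p
    obtain ⟨u, -, hu, hgu⟩ := h v (hv ▸ EReal.coe_ne_top _)
    rw [hv, ← EReal.coe_add] at hgu
    have h₁ := fenchelConj_le_coe_iff.1 hgu p
    have h₂ : ⟪v - u, p⟫ ≤ r * ‖p‖ :=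
      (real_inner_le_norm _ _).trans (by rw [norm_sub_rev]; gcongr)
    rw [inner_sub_left] at h₂
    linarith

end FenchelConjugate

theorem forall_exists_le_add_iff_epigraph_subset {F : Type*} [SeminormedAddCommGroup F]
    {L₁ L₂ : F → EReal} (hL₁ : ∀ v, L₁ v ≠ ⊥) {K W : ℝ} (hW : 0 ≤ W) :
    (∀ v, L₁ v ≠ ⊤ → ∃ u, L₂ u ≠ ⊤ ∧ ‖u - v‖ ≤ K ∧ L₂ u ≤ L₁ v + (W : EReal)) ↔
      {q : F × ℝ | L₁ q.1 ≤ q.2} ⊆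
        {q : F × ℝ | L₂ q.1 ≤ q.2} + closedBall (0 : F) K ×ˢ Icc (-W) W := by
  constructor
  · rintro h ⟨v, η⟩ (hη : L₁ v ≤ η)
    obtain ⟨u, -, hu, hLu⟩ := h v (ne_top_of_le_ne_top (EReal.coe_ne_top η) hη)
    refine ⟨(u, η + W), ?_, (v - u, -W), ⟨?_, ?_⟩, ?_⟩
    · show L₂ u ≤ ((η + W : ℝ) : EReal)
      rw [EReal.coe_add]
      exact hLu.trans (add_le_add_left hη _)
    · rwa [mem_closedBall_zero_iff, norm_sub_rev]
    · exact ⟨le_rfl, by linarith⟩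
    · simp
  · intro h v hv
    obtain ⟨ρ, hρ⟩ : ∃ ρ : ℝ, L₁ v = ρ := ⟨_, (EReal.coe_toReal hv (hL₁ v)).symm⟩
    obtain ⟨⟨u, μ⟩, hμ, ⟨d, ε⟩, ⟨hd, hε⟩, hsum⟩ := h (show (v, ρ) ∈ _ from hρ.le)
    simp only [Prod.mk_add_mk, Prod.mk.injEq] at hsum
    obtain ⟨rfl, rfl⟩ := hsum
    refine ⟨u, ne_top_of_le_ne_top (EReal.coe_ne_top μ) hμ, ?_, hμ.trans ?_⟩
    · simpa using hd
    · rw [hρ, ← EReal.coe_add]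
      exact EReal.coe_le_coe_iff.2 (by linarith [hε.1])

theorem hlc_iff_llc_iff_mlc_general (n : ℕ) (T : ℝ)
    (H : ℝ → Eucl n → Eucl n → ℝ)
    (hconv : ∀ t ∈ Icc (0 : ℝ) T, ∀ x : Eucl n, ConvexOn ℝ univ (H t x))
    (R : ℝ)
    (k : ℝ → ℝ) (hk0 : ∀ t, 0 ≤ k t)
    (w : ℝ → ℝ → ℝ) (hw : IsModulus w)
    (N : Set ℝ) :
    -- (HLC) ↔ (LLC)
    ((∀ t ∈ Icc (0 : ℝ) T \ N, ∀ x ∈ closedBall (0 : Eucl n) R,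
        ∀ y ∈ closedBall (0 : Eucl n) R, ∀ p : Eucl n,
        |H t x p - H t y p| ≤ k t * ‖p‖ * ‖x - y‖ + w t ‖x - y‖) ↔
      (∀ t ∈ Icc (0 : ℝ) T \ N, ∀ x ∈ closedBall (0 : Eucl n) R,
        ∀ y ∈ closedBall (0 : Eucl n) R, ∀ v : Eucl n, LFT H t x v ≠ ⊤ →
        ∃ u : Eucl n, LFT H t y u ≠ ⊤ ∧ ‖u - v‖ ≤ k t * ‖y - x‖ ∧
          LFT H t y u ≤ LFT H t x v + ((w t ‖x - y‖ : ℝ) : EReal))) ∧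
    -- (LLC) ↔ (MLC)
    ((∀ t ∈ Icc (0 : ℝ) T \ N, ∀ x ∈ closedBall (0 : Eucl n) R,
        ∀ y ∈ closedBall (0 : Eucl n) R, ∀ v : Eucl n, LFT H t x v ≠ ⊤ →
        ∃ u : Eucl n, LFT H t y u ≠ ⊤ ∧ ‖u - v‖ ≤ k t * ‖y - x‖ ∧
          LFT H t y u ≤ LFT H t x v + ((w t ‖x - y‖ : ℝ) : EReal)) ↔
      (∀ t ∈ Icc (0 : ℝ) T \ N, ∀ x ∈ closedBall (0 : Eucl n) R,
        ∀ y ∈ closedBall (0 : Eucl n) R,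
        epiL H t x ⊆ epiL H t y +
          (closedBall (0 : Eucl n) (k t * ‖x - y‖)) ×ˢ Icc (-(w t ‖x - y‖)) (w t ‖x - y‖))) := by
  have hslice : ∀ t ∈ Icc (0 : ℝ) T \ N, ∀ x y : Eucl n,
      (∀ p, H t x p - H t y p ≤ k t * ‖y - x‖ * ‖p‖ + w t ‖x - y‖) ↔
        ∀ v, LFT H t x v ≠ ⊤ → ∃ u, LFT H t y u ≠ ⊤ ∧ ‖u - v‖ ≤ k t * ‖y - x‖ ∧
          LFT H t y u ≤ LFT H t x v + ((w t ‖x - y‖ : ℝ) : EReal) := fun t ht x y =>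
    (hconv t ht.1 x).forall_sub_le_iff_forall_exists_fenchelConj_le (hconv t ht.1 y)
      (mul_nonneg (hk0 t) (norm_nonneg _))
  refine ⟨⟨fun hH t ht x hx y hy => (hslice t ht x y).1 fun p => ?_,
      fun hL t ht x hx y hy p => abs_sub_le_iff.2 ⟨?_, ?_⟩⟩,
    forall₂_congr fun t _ => forall₂_congr fun x _ => forall₂_congr fun y _ => ?_⟩
  · have := (le_abs_self _).trans (hH t ht x hx y hy p)
    rw [norm_sub_rev y x]
    linarith
  · have := (hslice t ht x y).2 (hL t ht x hx y hy) p
    rw [norm_sub_rev y x] at this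
    linarith
  · have := (hslice t ht y x).2 (hL t ht y hy x hx) p
    rw [norm_sub_rev y x] at this
    linarith
  · rw [norm_sub_rev y x]
    exact forall_exists_le_add_iff_epigraph_subset (fenchelConj_ne_bot (H t x)) ((hw.2 t).1 _)

/-- Theorem 2.4 of the paper. For a Hamiltonian which is finite and
convex in its last variable, the three Lipschitz-type conditions (HLC), (LLC) and (MLC)
are equivalent, with the same function `k`, modulus `w` and null set `N`. -/
theorem hlc_iff_llc_iff_mlc (n : ℕ) (T : ℝ) (hT : 0 ≤ T)
    (H : ℝ → Eucl n → Eucl n → ℝ)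
    (hconv : ∀ t ∈ Icc (0 : ℝ) T, ∀ x : Eucl n, ConvexOn ℝ univ (H t x))
    (R : ℝ) (hR : 0 < R)
    (k : ℝ → ℝ) (hkm : Measurable k) (hk0 : ∀ t, 0 ≤ k t)
    (w : ℝ → ℝ → ℝ) (hw : IsModulus w)
    (N : Set ℝ) (hN : volume N = 0) :
    -- (HLC) ↔ (LLC)
    ((∀ t ∈ Icc (0 : ℝ) T \ N, ∀ x ∈ closedBall (0 : Eucl n) R,
        ∀ y ∈ closedBall (0 : Eucl n) R, ∀ p : Eucl n,
        |H t x p - H t y p| ≤ k t * ‖p‖ * ‖x - y‖ + w t ‖x - y‖) ↔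
      (∀ t ∈ Icc (0 : ℝ) T \ N, ∀ x ∈ closedBall (0 : Eucl n) R,
        ∀ y ∈ closedBall (0 : Eucl n) R, ∀ v : Eucl n, LFT H t x v ≠ ⊤ →
        ∃ u : Eucl n, LFT H t y u ≠ ⊤ ∧ ‖u - v‖ ≤ k t * ‖y - x‖ ∧
          LFT H t y u ≤ LFT H t x v + ((w t ‖x - y‖ : ℝ) : EReal))) ∧
    -- (LLC) ↔ (MLC)
    ((∀ t ∈ Icc (0 : ℝ) T \ N, ∀ x ∈ closedBall (0 : Eucl n) R,
        ∀ y ∈ closedBall (0 : Eucl n) R, ∀ v : Eucl n, LFT H t x v ≠ ⊤ →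
        ∃ u : Eucl n, LFT H t y u ≠ ⊤ ∧ ‖u - v‖ ≤ k t * ‖y - x‖ ∧
          LFT H t y u ≤ LFT H t x v + ((w t ‖x - y‖ : ℝ) : EReal)) ↔
      (∀ t ∈ Icc (0 : ℝ) T \ N, ∀ x ∈ closedBall (0 : Eucl n) R,
        ∀ y ∈ closedBall (0 : Eucl n) R,
        epiL H t x ⊆ epiL H t y +
          (closedBall (0 : Eucl n) (k t * ‖x - y‖)) ×ˢ Icc (-(w t ‖x - y‖)) (w t ‖x - y‖))) :=
  hlc_iff_llc_iff_mlc_general n T H hconv R k hk0 w hw N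
end
end

section
/- Fix (t,x) ∈ [0,T]×ℝⁿ and suppose that p ↦ H(t,x,p) is proper, convex and lower semicontinuous, and let L(t,x,·) = H*(t,x,·). Let A be a set and e : A → ℝⁿ×ℝ a map with e(t,x,A) = E_L(t,x) := {(v,η) : L(t,x,v) ≤ η}. If e(t,x,a) = (f(t,x,a), l(t,x,a)) for every a ∈ A, then H(t,x,p) = sup_{a∈A}(⟨p, f(t,x,a)⟩ − l(t,x,a)) for all p ∈ ℝⁿ; moreover f(t,x,A) = dom L(t,x,·) and l(t,x,a) ≥ −|H(t,x,0)| for every a ∈ A. -/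
open Filter Topology MeasureTheory Set Metric
open scoped RealInnerProductSpace Pointwise

noncomputable section

/-!
Fenchel–Moreau. The epigraph of `Hx` in `ℝⁿ × ℝ` is closed and convex, so a point `(p, c)` with
`c < Hx p` is strictly separated from it by a half-space `ℓ q - γ r < u`, where `γ ≥ 0` because
the epigraph is closed upwards. If `γ > 0` the boundary of the half-space is the graph of an affine
minorant of `Hx` exceeding `c` at `p`. If `γ = 0` (possible only when `Hx p = ⊤`), adding a large
multiple of `ℓ` to any affine minorant does the same; one exists by the case `γ > 0` applied at a
point of the domain. Thus `Hx` is the supremum of its affine minorants `q ↦ ⟪q, v⟫ - η`, and these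
are exactly the pairs `(v, η)` with `eConj Hx v ≤ η`, i.e. the points of `range e`.
-/

section Epigraph

variable {E : Type*}

def realEpigraph (φ : E → EReal) : Set (E × ℝ) := {qr | φ qr.1 ≤ qr.2}

theorem EConvex.convex_realEpigraph [AddCommGroup E] [Module ℝ E] {φ : E → EReal}
    (hφ : EConvex φ) : Convex ℝ (realEpigraph φ) := by
  rintro ⟨q₁, r₁⟩ (h₁ : φ q₁ ≤ r₁) ⟨q₂, r₂⟩ (h₂ : φ q₂ ≤ r₂) a b ha hb hab
  calc φ (a • q₁ + b • q₂) ≤ (a : EReal) * φ q₁ + (b : EReal) * φ q₂ := hφ q₁ q₂ a b ha hb hab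
    _ ≤ (a : EReal) * r₁ + (b : EReal) * r₂ := by gcongr
    _ = ((a * r₁ + b * r₂ : ℝ) : EReal) := by norm_cast

theorem LowerSemicontinuous.isClosed_realEpigraph [TopologicalSpace E] {φ : E → EReal}
    (hφ : LowerSemicontinuous φ) : IsClosed (realEpigraph φ) :=
  hφ.isClosed_epigraph.preimage <|
    continuous_fst.prodMk (continuous_coe_real_ereal.comp continuous_snd)

end Epigraph

section AffineMinorant

variable {E : Type*} [TopologicalSpace E] [AddCommGroup E] [Module ℝ E] {φ : E → EReal}

def IsAffineMinorant (φ : E → EReal) (ℓ : E →L[ℝ] ℝ) (η : ℝ) : Prop :=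
  ∀ q, ((ℓ q - η : ℝ) : EReal) ≤ φ q

theorem isAffineMinorant_of_forall_sub_mul_lt {ℓ : E →L[ℝ] ℝ} {γ u : ℝ} (hγ : 0 < γ)
    (hsep : ∀ q (r : ℝ), φ q ≤ r → ℓ q - γ * r < u) :
    IsAffineMinorant φ (γ⁻¹ • ℓ) (u / γ) := by
  intro q
  by_contra! hlt
  have hsep_q := hsep q _ hlt.le
  have : ℓ q - γ * ((γ⁻¹ • ℓ) q - u / γ) = u := by
    simp only [smul_apply, smul_eq_mul]
    field_simp
    ring
  linarith

theorem nonneg_of_forall_sub_mul_lt {ℓ : E →L[ℝ] ℝ} {γ u : ℝ}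
    (hsep : ∀ q (r : ℝ), φ q ≤ r → ℓ q - γ * r < u) (hdom : ∃ q, φ q ≠ ⊤) : 0 ≤ γ := by
  obtain ⟨q, hq⟩ := hdom
  by_contra! hγ
  set r := max (φ q).toReal ((ℓ q - u) / γ)
  have hr : φ q ≤ r := (EReal.le_coe_toReal hq).trans (EReal.coe_le_coe_iff.2 (le_max_left _ _))
  have : γ * r ≤ ℓ q - u := by
    rw [mul_comm, ← div_le_iff_of_neg hγ]
    exact le_max_right _ _
  linarith [hsep q r hr]

theorem IsAffineMinorant.exists_gt_of_forall_le_lt {ℓ₁ ℓ : E →L[ℝ] ℝ} {η₁ u : ℝ}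
    (h₁ : IsAffineMinorant φ ℓ₁ η₁) (hdom : ∀ q, φ q ≠ ⊤ → ℓ q ≤ u) {p : E} (hp : u < ℓ p)
    (c : ℝ) : ∃ ℓ' η', IsAffineMinorant φ ℓ' η' ∧ c < ℓ' p - η' := by
  set t := max 0 ((c + 1 - (ℓ₁ p - η₁)) / (ℓ p - u))
  have ht : c + 1 - (ℓ₁ p - η₁) ≤ t * (ℓ p - u) := by
    rw [← div_le_iff₀ (sub_pos.2 hp)]
    exact le_max_right _ _
  refine ⟨ℓ₁ + t • ℓ, η₁ + t * u, fun q => ?_, ?_⟩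
  · by_cases hq : φ q = ⊤
    · simp [hq]
    refine le_trans (EReal.coe_le_coe_iff.2 ?_) (h₁ q)
    have : t * (ℓ q - u) ≤ 0 :=
      mul_nonpos_of_nonneg_of_nonpos (le_max_left _ _) (sub_nonpos.2 (hdom q hq))
    simp only [add_apply, smul_apply, smul_eq_mul]
    linarith
  · simp only [add_apply, smul_apply, smul_eq_mul]
    linarith

variable [IsTopologicalAddGroup E] [ContinuousSMul ℝ E] [LocallyConvexSpace ℝ E]

theorem exists_forall_sub_mul_lt_of_lt (hc : EConvex φ) (hl : LowerSemicontinuous φ) {p : E}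
    {c : ℝ} (hpc : (c : EReal) < φ p) :
    ∃ (ℓ : E →L[ℝ] ℝ) (γ u : ℝ), (∀ q (r : ℝ), φ q ≤ r → ℓ q - γ * r < u) ∧
      u < ℓ p - γ * c := by
  obtain ⟨f, u, hf, hfp⟩ := geometric_hahn_banach_closed_point hc.convex_realEpigraph
    hl.isClosed_realEpigraph (x := (p, c)) (not_le.2 hpc)
  have hsplit : ∀ q r, f (q, r) = f.comp (.inl ℝ E ℝ) q - -f (0, 1) * r := fun q r =>
    calc f (q, r) = f (q, 0) + f (r • (0, 1)) := by rw [← map_add]; simp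
      _ = _ := by rw [map_smul]; simp [mul_comm]
  exact ⟨_, _, u, fun q r hqr => hsplit q r ▸ hf (q, r) hqr, hsplit p c ▸ hfp⟩

theorem EProper.exists_isAffineMinorant (hp : EProper φ) (hc : EConvex φ)
    (hl : LowerSemicontinuous φ) : ∃ ℓ η, IsAffineMinorant φ ℓ η := by
  obtain ⟨q, hq⟩ := hp.2
  obtain ⟨c, -, hcq⟩ := EReal.exists_between_coe_real (bot_lt_iff_ne_bot.2 (hp.1 q))
  obtain ⟨ℓ, γ, u, hsep, hq'⟩ := exists_forall_sub_mul_lt_of_lt hc hl hcq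
  have hr : φ q ≤ (φ q).toReal := EReal.le_coe_toReal hq
  have hγ : 0 < γ := by
    have := hsep q _ hr
    have : c < (φ q).toReal := EReal.coe_lt_coe_iff.1 (hcq.trans_le hr)
    nlinarith
  exact ⟨_, _, isAffineMinorant_of_forall_sub_mul_lt hγ hsep⟩

theorem exists_isAffineMinorant_gt (hp : EProper φ) (hc : EConvex φ) (hl : LowerSemicontinuous φ)
    {p : E} {c : ℝ} (hpc : (c : EReal) < φ p) :
    ∃ ℓ η, IsAffineMinorant φ ℓ η ∧ c < ℓ p - η := by
  obtain ⟨ℓ, γ, u, hsep, hp'⟩ := exists_forall_sub_mul_lt_of_lt hc hl hpc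
  rcases (nonneg_of_forall_sub_mul_lt hsep hp.2).lt_or_eq with hγ | rfl
  · refine ⟨_, _, isAffineMinorant_of_forall_sub_mul_lt hγ hsep, ?_⟩
    simp only [smul_apply, smul_eq_mul]
    rw [inv_mul_eq_div, ← sub_div, lt_div_iff₀ hγ]
    linarith
  · obtain ⟨ℓ₁, η₁, h₁⟩ := hp.exists_isAffineMinorant hc hl
    refine h₁.exists_gt_of_forall_le_lt (fun q hq => ?_) (by simpa using hp') c
    simpa using (hsep q _ (EReal.le_coe_toReal hq)).le

end AffineMinorant

section Conjugate

variable {n : ℕ}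

theorem eConj_le_coe_iff (φ : Eucl n → EReal) (v : Eucl n) (η : ℝ) :
    eConj φ v ≤ η ↔ ∀ p, ((⟪p, v⟫ - η : ℝ) : EReal) ≤ φ p := by
  refine iSup_le_iff.trans (forall_congr' fun p => ?_)
  rw [real_inner_comm]
  induction φ p using EReal.rec <;> simp [← EReal.coe_sub, add_comm]

theorem exists_eConj_le_gt {φ : Eucl n → EReal} (hp : EProper φ) (hc : EConvex φ)
    (hl : LowerSemicontinuous φ) {p : Eucl n} {c : ℝ} (hpc : (c : EReal) < φ p) :
    ∃ (v : Eucl n) (η : ℝ), eConj φ v ≤ η ∧ c < ⟪p, v⟫ - η := by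
  obtain ⟨ℓ, η, hℓ, hcp⟩ := exists_isAffineMinorant_gt hp hc hl hpc
  set v := (InnerProductSpace.toDual ℝ (Eucl n)).symm ℓ
  have hinner : ∀ q, ⟪q, v⟫ = ℓ q := fun q => by
    rw [real_inner_comm, InnerProductSpace.toDual_symm_apply]
  refine ⟨v, η, (eConj_le_coe_iff φ v η).2 fun q => ?_, ?_⟩ <;> rw [hinner]
  exacts [hℓ q, hcp]

theorem eConj_ne_bot {φ : Eucl n → EReal} (hφ : ∃ p, φ p ≠ ⊤) (v : Eucl n) : eConj φ v ≠ ⊥ := by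
  obtain ⟨p, hp⟩ := hφ
  refine ne_bot_of_le_ne_bot ?_ (le_iSup (fun p => ((⟪v, p⟫ : ℝ) : EReal) - φ p) p)
  generalize φ p = x at hp
  induction x using EReal.rec <;> simp_all [← EReal.coe_sub]

theorem neg_max_neg_le_eConj (φ : Eucl n → EReal) (v : Eucl n) :
    -(max (φ 0) (-(φ 0))) ≤ eConj φ v :=
  calc -(max (φ 0) (-(φ 0))) ≤ -(φ 0) := EReal.neg_le_neg_iff.2 (le_max_left _ _)
    _ = ((⟪v, 0⟫ : ℝ) : EReal) - φ 0 := by simp [sub_eq_add_neg]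
    _ ≤ eConj φ v := le_iSup (fun p => ((⟪v, p⟫ : ℝ) : EReal) - φ p) 0

end Conjugate

/-- Proposition 5.1 of the paper. Fix `(t,x)` and write
`Hx := H(t,x,·)`, assumed proper, convex, lower semicontinuous, and `L(t,x,·) = H*(t,x,·)`.
If `e : A → ℝⁿ×ℝ` parametrizes the epigraph `E_L(t,x)`, i.e. `e(A) = E_L(t,x)`, and
`e a = (f a, l a)`, then `Hx p = sup_{a∈A}(⟨p, f a⟩ − l a)`, the image of `f` is
`dom L(t,x,·)`, and `l a ≥ −|Hx 0|`. -/
theorem epigraph_parametrization_represents (n : ℕ)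
    (Hx : Eucl n → EReal)
    (hp : EProper Hx) (hc : EConvex Hx) (hl : LowerSemicontinuous Hx)
    {A : Type*} (e : A → Eucl n × ℝ)
    (he : range e = {q : Eucl n × ℝ | eConj Hx q.1 ≤ (q.2 : EReal)}) :
    (∀ p : Eucl n,
      Hx p = ⨆ a : A, ((⟪p, (e a).1⟫ - (e a).2 : ℝ) : EReal)) ∧
    (range (fun a => (e a).1) = {v : Eucl n | eConj Hx v ≠ ⊤}) ∧
    (∀ a : A, -(max (Hx 0) (-(Hx 0))) ≤ (((e a).2 : ℝ) : EReal)) := by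
  have hmem : ∀ q, q ∈ range e ↔ eConj Hx q.1 ≤ q.2 := fun q => by rw [he]; rfl
  have he_mem : ∀ a, eConj Hx (e a).1 ≤ (e a).2 := fun a => (hmem _).1 (mem_range_self a)
  refine ⟨fun p => le_antisymm ?_ (iSup_le fun a => (eConj_le_coe_iff Hx _ _).1 (he_mem a) p),
    ?_, fun a => (neg_max_neg_le_eConj Hx _).trans (he_mem a)⟩
  · by_contra! hlt
    obtain ⟨c, hsup, hc_lt⟩ := EReal.exists_between_coe_real hlt
    obtain ⟨v, η, hvη, hcv⟩ := exists_eConj_le_gt hp hc hl hc_lt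
    obtain ⟨a, ha⟩ := (hmem (v, η)).2 hvη
    have hle := le_iSup (fun a => ((⟪p, (e a).1⟫ - (e a).2 : ℝ) : EReal)) a
    rw [ha] at hle
    exact hsup.not_ge ((EReal.coe_lt_coe_iff.2 hcv).le.trans hle)
  · ext v
    refine ⟨?_, fun hv => ?_⟩
    · rintro ⟨a, rfl⟩
      exact ne_top_of_le_ne_top (EReal.coe_ne_top _) (he_mem a)
    · obtain ⟨a, ha⟩ := (hmem (v, (eConj Hx v).toReal)).2
        (EReal.coe_toReal hv (eConj_ne_bot hp.2 v)).ge
      exact ⟨a, congrArg Prod.fst ha⟩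
end
end
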